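/- Let M > 0, h ≥ 1, R > 1, and let ω ∈ C^∞(ℝ) satisfy |ω(ξ)| ≤ 1 for all ξ, ω(ξ) = 0 for |ξ| ≤ 1, and ω constant on each of {ξ ≥ R} and {ξ ≤ −R}. Define λ(x,ξ) := M·ω(ξ/h)·∫₀ˣ ⟨y⟩^{-1} dy. Then for all integers α ≥ 1, β ≥ 1 there exists C_{α,β} > 0 (depending on α, β, M, R, ω but not on h, x, ξ) such that, for either choice of sign, |∂_ξ^α ∂_x^β e^{±λ(x,ξ)}| ≤ C_{α,β}·(1 + ln⟨x⟩·χ_{E_{h,R}}(ξ))^α·⟨x⟩^{−β}·⟨ξ⟩_h^{−α}·e^{±λ(x,ξ)} for all x, ξ ∈ ℝ, where χ_{E_{h,R}} is the characteristic function of E_{h,R} = {ξ ∈ ℝ : h ≤ |ξ| ≤ hR}. -/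

import Mathlib

/-!
Since `∫₀ˣ ⟨y⟩⁻¹ dy = arsinh x`, the exponent is `c(ξ) · arsinh x` with `c(ξ) = ±M ω(ξ/h)`.
In `x`, `∂ₓ^β e^{τ arsinh x} = ∑_{i ≤ β} Pᵢ(x) τ^i e^{τ arsinh x}` with every `Pᵢ` in the symbol
class `S^{-β}`, because `arsinh' = ⟨x⟩⁻¹ ∈ S^{-1}` and symbol classes are stable under products
and derivatives; each further `τ`-derivative costs a factor `1 + |arsinh x| ≤ 2 (1 + ln⟨x⟩)`.
In `ξ`, Faà di Bruno for `τ = c(ξ)` costs a factor `h⁻¹` per derivative, and `h⁻¹ ≲ ⟨ξ⟩ₕ⁻¹` on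
`E_{h,R}`. Off `E_{h,R}` the function `c` is locally constant, so every `ξ`-derivative vanishes.
-/

open MeasureTheory Real Finset Filter Topology

noncomputable section

/-- The Japanese bracket `⟨x⟩ = (1 + x²)^(1/2)`. -/
def jb (x : ℝ) : ℝ := Real.sqrt (1 + x ^ 2)

/-- `⟨ξ⟩ₕ = (h² + ξ²)^(1/2)`. -/
def jbh (h ξ : ℝ) : ℝ := Real.sqrt (h ^ 2 + ξ ^ 2)

lemma jb_pos (x : ℝ) : 0 < jb x := Real.sqrt_pos.mpr (by positivity)

lemma one_le_jb (x : ℝ) : 1 ≤ jb x := Real.one_le_sqrt.mpr (by nlinarith)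

lemma abs_le_jb (x : ℝ) : |x| ≤ jb x := by
  rw [jb, ← Real.sqrt_sq_eq_abs]
  exact Real.sqrt_le_sqrt (by linarith)

lemma jb_rpow_sub_natCast (x r : ℝ) (k : ℕ) : jb x ^ (r - k) = jb x ^ r * (jb x)⁻¹ ^ k := by
  rw [Real.rpow_sub (jb_pos x), Real.rpow_natCast, div_eq_mul_inv, inv_pow]

lemma hasDerivAt_jb_rpow (r x : ℝ) :
    HasDerivAt (fun y => jb y ^ r) (r * x * jb x ^ (r - 2)) x := by
  have h1 : HasDerivAt (fun y => 1 + y ^ 2) (2 * x) x := by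
    simpa using (hasDerivAt_pow 2 x).const_add 1
  have h2 := h1.rpow_const (p := r / 2) (Or.inl (by positivity))
  have hjb : ∀ (y s : ℝ), jb y ^ s = (1 + y ^ 2) ^ (s / 2) := fun y s => by
    rw [jb, Real.sqrt_eq_rpow, ← Real.rpow_mul (by positivity)]
    ring_nf
  simp only [hjb]
  convert h2 using 1
  ring_nf

theorem abs_iteratedDeriv_mul_le_of_le {f g : ℝ → ℝ} {n : ℕ} (hf : ContDiff ℝ n f)
    (hg : ContDiff ℝ n g) {x w F G : ℝ}
    (hfx : ∀ k ≤ n, |iteratedDeriv k f x| ≤ F * w ^ k)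
    (hgx : ∀ k ≤ n, |iteratedDeriv k g x| ≤ G * w ^ k) :
    |iteratedDeriv n (fun y => f y * g y) x| ≤ 2 ^ n * F * G * w ^ n := by
  have hleib := norm_iteratedFDeriv_mul_le hf hg x le_rfl
  simp only [norm_iteratedFDeriv_eq_norm_iteratedDeriv, Real.norm_eq_abs] at hleib
  refine hleib.trans ?_
  calc ∑ k ∈ range (n + 1), (n.choose k : ℝ) * |iteratedDeriv k f x| * |iteratedDeriv (n - k) g x|
      ≤ ∑ k ∈ range (n + 1), (n.choose k : ℝ) * (F * w ^ k) * (G * w ^ (n - k)) := by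
        gcongr with k hk
        · have := (abs_nonneg _).trans (hfx k (by grind))
          positivity
        · exact hfx k (by grind)
        · exact hgx (n - k) (by omega)
    _ = 2 ^ n * F * G * w ^ n := by
        have h2 : (2 : ℝ) ^ n = ∑ k ∈ range (n + 1), (n.choose k : ℝ) := by
          exact_mod_cast (Nat.sum_range_choose n).symm
        rw [h2, sum_mul, sum_mul, sum_mul]
        refine sum_congr rfl fun k hk => ?_
        rw [← pow_mul_pow_sub w (by grind : k ≤ n)]
        ring

/-- The symbol class `S^r` on `ℝ`. -/
def IsSymbol (r : ℝ) (f : ℝ → ℝ) : Prop :=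
  ContDiff ℝ (⊤ : ℕ∞) f ∧ ∀ n : ℕ, ∃ C, ∀ k ≤ n, ∀ x, |iteratedDeriv k f x| ≤ C * jb x ^ (r - k)

lemma abs_iteratedDeriv_mul_le_jb_rpow {f g : ℝ → ℝ} {n : ℕ} {r r' Cf Cg : ℝ}
    (hf : ContDiff ℝ n f) (hg : ContDiff ℝ n g)
    (hfC : ∀ k ≤ n, ∀ x, |iteratedDeriv k f x| ≤ Cf * jb x ^ (r - k))
    (hgC : ∀ k ≤ n, ∀ x, |iteratedDeriv k g x| ≤ Cg * jb x ^ (r' - k)) :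
    ∀ k ≤ n, ∀ x, |iteratedDeriv k (fun y => f y * g y) x| ≤
      2 ^ n * Cf * Cg * jb x ^ (r + r' - k) := by
  have hCf : 0 ≤ Cf := nonneg_of_mul_nonneg_left ((abs_nonneg _).trans (hfC 0 (Nat.zero_le n) 0))
    (Real.rpow_pos_of_pos (jb_pos 0) _)
  have hCg : 0 ≤ Cg := nonneg_of_mul_nonneg_left ((abs_nonneg _).trans (hgC 0 (Nat.zero_le n) 0))
    (Real.rpow_pos_of_pos (jb_pos 0) _)
  intro k hk x
  have hmul := abs_iteratedDeriv_mul_le_of_le (hf.of_le (by exact_mod_cast hk))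
    (hg.of_le (by exact_mod_cast hk)) (x := x) (w := (jb x)⁻¹) (F := Cf * jb x ^ r)
    (G := Cg * jb x ^ r')
    (fun j hj => by rw [mul_assoc, ← jb_rpow_sub_natCast]; exact hfC j (hj.trans hk) x)
    (fun j hj => by rw [mul_assoc, ← jb_rpow_sub_natCast]; exact hgC j (hj.trans hk) x)
  refine hmul.trans ?_
  rw [jb_rpow_sub_natCast x (r + r') k, Real.rpow_add (jb_pos x)]
  have h2 : (2 : ℝ) ^ k ≤ 2 ^ n := pow_le_pow_right₀ one_le_two hk
  have := jb_pos x
  have := Real.rpow_pos_of_pos (jb_pos x) r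
  have := Real.rpow_pos_of_pos (jb_pos x) r'
  calc 2 ^ k * (Cf * jb x ^ r) * (Cg * jb x ^ r') * (jb x)⁻¹ ^ k
      ≤ 2 ^ n * (Cf * jb x ^ r) * (Cg * jb x ^ r') * (jb x)⁻¹ ^ k := by gcongr
    _ = _ := by ring

theorem IsSymbol.mul {r r' : ℝ} {f g : ℝ → ℝ} (hf : IsSymbol r f) (hg : IsSymbol r' g) :
    IsSymbol (r + r') (fun x => f x * g x) := by
  refine ⟨hf.1.mul hg.1, fun n => ?_⟩
  obtain ⟨Cf, hCf⟩ := hf.2 n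
  obtain ⟨Cg, hCg⟩ := hg.2 n
  exact ⟨_, abs_iteratedDeriv_mul_le_jb_rpow (hf.1.of_le (by exact_mod_cast le_top))
    (hg.1.of_le (by exact_mod_cast le_top)) hCf hCg⟩

theorem IsSymbol.add {r : ℝ} {f g : ℝ → ℝ} (hf : IsSymbol r f) (hg : IsSymbol r g) :
    IsSymbol r (fun x => f x + g x) := by
  refine ⟨hf.1.add hg.1, fun n => ?_⟩
  obtain ⟨Cf, hCf⟩ := hf.2 n
  obtain ⟨Cg, hCg⟩ := hg.2 n
  refine ⟨Cf + Cg, fun k hk x => ?_⟩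
  rw [iteratedDeriv_fun_add (hf.1.contDiffAt.of_le (by exact_mod_cast le_top))
    (hg.1.contDiffAt.of_le (by exact_mod_cast le_top)), add_mul]
  exact (abs_add_le _ _).trans (add_le_add (hCf k hk x) (hCg k hk x))

theorem IsSymbol.deriv {r : ℝ} {f : ℝ → ℝ} (hf : IsSymbol r f) : IsSymbol (r - 1) (deriv f) := by
  refine ⟨(contDiff_infty_iff_deriv.mp hf.1).2, fun n => ?_⟩
  obtain ⟨C, hC⟩ := hf.2 (n + 1)
  refine ⟨C, fun k hk x => ?_⟩
  rw [← iteratedDeriv_succ', show r - 1 - k = r - ((k + 1 : ℕ) : ℝ) by push_cast; ring]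
  exact hC (k + 1) (by omega) x

theorem isSymbol_const (c : ℝ) : IsSymbol 0 (fun _ => c) := by
  refine ⟨contDiff_const, fun n => ⟨|c|, fun k _ x => ?_⟩⟩
  rw [iteratedDeriv_const]
  split_ifs with hk
  · simp [hk]
  · rw [abs_zero]
    exact mul_nonneg (abs_nonneg c) (Real.rpow_pos_of_pos (jb_pos x) _).le

theorem isSymbol_const_mul_id (c : ℝ) : IsSymbol 1 (fun x => c * x) := by
  refine ⟨contDiff_const.mul contDiff_id, fun n => ⟨|c|, fun k _ x => ?_⟩⟩
  rw [iteratedDeriv_const_mul_field, iteratedDeriv_fun_id, abs_mul]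
  have hjb := jb_pos x
  split_ifs with h0 h1
  · subst h0
    simpa using mul_le_mul_of_nonneg_left (abs_le_jb x) (abs_nonneg c)
  · subst h1; simp
  · rw [abs_zero, mul_zero]
    exact mul_nonneg (abs_nonneg c) (Real.rpow_pos_of_pos hjb _).le

theorem contDiff_jb : ContDiff ℝ (⊤ : ℕ∞) jb :=
  (contDiff_const.add (contDiff_id.pow 2)).sqrt fun x => by positivity

theorem contDiff_jb_rpow (r : ℝ) : ContDiff ℝ (⊤ : ℕ∞) (fun x => jb x ^ r) :=
  contDiff_jb.rpow_const_of_ne fun x => (jb_pos x).ne'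

theorem isSymbol_jb_rpow (r : ℝ) : IsSymbol r (fun x => jb x ^ r) := by
  refine ⟨contDiff_jb_rpow r, fun n => ?_⟩
  -- `(⟨x⟩^r)' = r x ⟨x⟩^(r-2)`: the estimates of order `n + 1` for `⟨x⟩^r` come from those of
  -- order `n` for `⟨x⟩^(r-2)`, so the induction on `n` runs over all exponents at once.
  induction n generalizing r with
  | zero =>
    refine ⟨1, fun k hk x => ?_⟩
    obtain rfl : k = 0 := by omega
    simp [abs_of_pos (Real.rpow_pos_of_pos (jb_pos x) r)]
  | succ n ih =>
    obtain ⟨C, hC⟩ := ih (r - 2)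
    obtain ⟨Cl, hCl⟩ := (isSymbol_const_mul_id r).2 n
    have hderiv : deriv (fun y => jb y ^ r) = fun y => r * y * jb y ^ (r - 2) :=
      funext fun y => (hasDerivAt_jb_rpow r y).deriv
    have hprod := abs_iteratedDeriv_mul_le_jb_rpow
      ((isSymbol_const_mul_id r).1.of_le (by exact_mod_cast le_top))
      ((contDiff_jb_rpow (r - 2)).of_le (by exact_mod_cast le_top)) hCl hC
    refine ⟨max 1 (2 ^ n * Cl * C), fun k hk x => ?_⟩
    have hpos := Real.rpow_pos_of_pos (jb_pos x)
    cases k with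
    | zero =>
      simpa [abs_of_pos (hpos r)] using
        mul_le_mul_of_nonneg_right (le_max_left 1 (2 ^ n * Cl * C)) (hpos r).le
    | succ k =>
      rw [iteratedDeriv_succ', hderiv]
      refine (hprod k (by omega) x).trans ?_
      rw [show 1 + (r - 2) - k = r - ((k + 1 : ℕ) : ℝ) by push_cast; ring]
      exact mul_le_mul_of_nonneg_right (le_max_right _ _) (hpos _).le

theorem exists_iteratedDeriv_exp_mul_eq {a : ℝ → ℝ} (ha : Differentiable ℝ a)
    (ha' : IsSymbol (-1) (deriv a)) (m : ℕ) :
    ∃ P : ℕ → ℝ → ℝ, (∀ i, IsSymbol (-m) (P i)) ∧ (∀ i, m < i → P i = 0) ∧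
      ∀ t x, iteratedDeriv m (fun y => exp (t * a y)) x =
        ∑ i ∈ range (m + 1), P i x * t ^ i * exp (t * a x) := by
  induction m with
  | zero =>
    refine ⟨fun i _ => if i = 0 then 1 else 0, fun i => ?_, fun i hi => ?_, fun t x => by simp⟩
    · rw [Nat.cast_zero, neg_zero]
      exact isSymbol_const _
    · simp [Nat.pos_iff_ne_zero.mp hi]; rfl
  | succ m ih =>
    obtain ⟨P, hP, hP0, hPeq⟩ := ih
    let Q : ℕ → ℝ → ℝ := fun i => match i with
      | 0 => deriv (P 0)
      | i + 1 => fun x => deriv (P (i + 1)) x + deriv a x * P i x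
    refine ⟨Q, fun i => ?_, fun i hi => ?_, fun t x => ?_⟩
    · cases i with
      | zero => simpa [Q, sub_eq_add_neg, add_comm] using (hP 0).deriv
      | succ i =>
        have hmul : IsSymbol (-m - 1) (fun x => deriv a x * P i x) := by
          convert ha'.mul (hP i) using 1; ring
        push_cast
        convert (hP (i + 1)).deriv.add hmul using 1; ring
    · obtain ⟨i, rfl⟩ : ∃ j, i = j + 1 := ⟨i - 1, by omega⟩
      funext x
      simp [Q, hP0 i (by omega), hP0 (i + 1) (by omega)]
    · have hterm : ∀ i ∈ range (m + 1), HasDerivAt (fun y => P i y * t ^ i * exp (t * a y))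
          (deriv (P i) x * t ^ i * exp (t * a x) +
            deriv a x * P i x * t ^ (i + 1) * exp (t * a x)) x := fun i _ => by
        have hPi := ((hP i).1.differentiable (by simp) x).hasDerivAt
        exact ((hPi.mul_const (t ^ i)).mul ((ha x).hasDerivAt.const_mul t).exp).congr_deriv
          (by ring)
      have hlast : deriv (P (m + 1)) x = 0 := by simp [hP0 (m + 1) (by omega)]
      rw [iteratedDeriv_succ, funext (hPeq t), (HasDerivAt.fun_sum hterm).deriv,
        sum_add_distrib, sum_range_succ' _ (m + 1)]
      simp only [Q, add_mul, sum_add_distrib]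
      have hshift : ∑ i ∈ range (m + 1), deriv (P i) x * t ^ i * exp (t * a x) =
          ∑ i ∈ range (m + 1), deriv (P (i + 1)) x * t ^ (i + 1) * exp (t * a x) +
            deriv (P 0) x * t ^ 0 * exp (t * a x) := by
        rw [← sum_range_succ' (fun i => deriv (P i) x * t ^ i * exp (t * a x)),
          sum_range_succ _ (m + 1), hlast, zero_mul, zero_mul, add_zero]
      rw [hshift]
      ring

lemma Set.Finite.exists_nonneg_forall_of_monotone {ι : Type*} {s : Set ι} (hs : s.Finite)
    {p : ι → ℝ → Prop} (hp : ∀ i, Monotone (p i)) (h : ∀ i ∈ s, ∃ C, p i C) :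
    ∃ C, 0 ≤ C ∧ ∀ i ∈ s, p i C := by
  have hev : ∀ i ∈ s, ∀ᶠ C in atTop, p i C := fun i hi =>
    let ⟨C, hC⟩ := h i hi
    (eventually_ge_atTop C).mono fun _ hC' => hp i hC' hC
  exact ((eventually_ge_atTop 0).and (hs.eventually_all.2 hev)).exists

theorem ContDiff.exists_bound_iteratedDeriv_on {f : ℝ → ℝ} (hf : ContDiff ℝ (⊤ : ℕ∞) f)
    {K : Set ℝ} (hK : IsCompact K) (n : ℕ) :
    ∃ C, 0 ≤ C ∧ ∀ k ≤ n, ∀ t ∈ K, |iteratedDeriv k f t| ≤ C :=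
  (Set.finite_Iic n).exists_nonneg_forall_of_monotone
    (fun _ _ _ hC h t ht => (h t ht).trans hC) fun k _ =>
      hK.exists_bound_of_continuousOn
        (hf.continuous_iteratedDeriv k (by exact_mod_cast le_top)).continuousOn

theorem exists_bound_iteratedDeriv_poly_mul_exp (M : ℝ) (m n : ℕ) :
    ∃ C ≥ 0, ∀ (p : ℕ → ℝ) (B A t : ℝ), (∀ i ≤ m, |p i| ≤ B) → |t| ≤ M → ∀ j ≤ n,
      |iteratedDeriv j (fun τ => ∑ i ∈ range (m + 1), p i * τ ^ i * exp (τ * A)) t| ≤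
        C * B * (1 + |A|) ^ n * exp (t * A) := by
  obtain ⟨Cm, hCm0, hCm⟩ := (Set.finite_Iic m).exists_nonneg_forall_of_monotone
    (p := fun i C => ∀ k ≤ n, ∀ t ∈ Set.Icc (-M) M, |iteratedDeriv k (fun τ : ℝ => τ ^ i) t| ≤ C)
    (fun _ _ _ hC h k hk t ht => (h k hk t ht).trans hC) fun i _ =>
      let ⟨C, _, hC⟩ := (contDiff_id.pow i).exists_bound_iteratedDeriv_on isCompact_Icc n
      ⟨C, hC⟩
  refine ⟨2 ^ n * (m + 1) * Cm, by positivity, fun p B A t hpB ht j hj => ?_⟩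
  have hB : 0 ≤ B := (abs_nonneg _).trans (hpB 0 (Nat.zero_le m))
  have hw : 1 ≤ 1 + |A| := le_add_of_nonneg_right (abs_nonneg A)
  have hpoly : ∀ k ≤ j, |iteratedDeriv k (fun τ => ∑ i ∈ range (m + 1), p i * τ ^ i) t| ≤
      ((m + 1) * Cm * B) * (1 + |A|) ^ k := by
    intro k hk
    rw [iteratedDeriv_fun_sum fun i _ => (contDiff_const.mul (contDiff_id.pow i)).contDiffAt]
    simp only [iteratedDeriv_const_mul_field]
    calc |∑ i ∈ range (m + 1), p i * iteratedDeriv k (fun τ : ℝ => τ ^ i) t|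
        ≤ ∑ i ∈ range (m + 1), B * Cm := by
          refine (abs_sum_le_sum_abs _ _).trans (sum_le_sum fun i hi => ?_)
          rw [abs_mul]
          have hi' : i ≤ m := Nat.lt_succ_iff.mp (mem_range.mp hi)
          exact mul_le_mul (hpB i hi') (hCm i hi' k (hk.trans hj) t (abs_le.mp ht))
            (abs_nonneg _) hB
      _ = (m + 1) * Cm * B * 1 := by simp; ring
      _ ≤ (m + 1) * Cm * B * (1 + |A|) ^ k := by gcongr; exact one_le_pow₀ hw
  have hexp : ∀ k ≤ j, |iteratedDeriv k (fun τ => exp (A * τ)) t| ≤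
      exp (t * A) * (1 + |A|) ^ k := by
    intro k _
    rw [iteratedDeriv_exp_const_mul, abs_mul, abs_pow, abs_of_pos (exp_pos _), mul_comm A t,
      mul_comm]
    gcongr
    exact le_add_of_nonneg_left zero_le_one
  have hfun : (fun τ => ∑ i ∈ range (m + 1), p i * τ ^ i * exp (τ * A)) =
      fun τ => (∑ i ∈ range (m + 1), p i * τ ^ i) * exp (A * τ) := by
    funext τ
    rw [sum_mul, mul_comm A τ]
  rw [hfun]
  refine (abs_iteratedDeriv_mul_le_of_le
    ((ContDiff.sum fun i _ => contDiff_const.mul (contDiff_id.pow i)).of_le le_top)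
    ((contDiff_const.mul contDiff_id).exp.of_le le_top) hpoly hexp).trans ?_
  have h2 : (2 : ℝ) ^ j ≤ 2 ^ n := pow_le_pow_right₀ one_le_two hj
  have hwj : (1 + |A|) ^ j ≤ (1 + |A|) ^ n := pow_le_pow_right₀ hw hj
  have := exp_pos (t * A)
  calc 2 ^ j * ((m + 1) * Cm * B) * exp (t * A) * (1 + |A|) ^ j
      ≤ 2 ^ n * ((m + 1) * Cm * B) * exp (t * A) * (1 + |A|) ^ n := by gcongr
    _ = _ := by ring

lemma integral_jb_inv (x : ℝ) : ∫ y in (0 : ℝ)..x, (jb y)⁻¹ = arsinh x := by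
  have hc : Continuous fun y => (jb y)⁻¹ := contDiff_jb.continuous.inv₀ fun y => (jb_pos y).ne'
  rw [intervalIntegral.integral_eq_sub_of_hasDerivAt (f := arsinh) (f' := fun y => (jb y)⁻¹)
    (fun y _ => hasDerivAt_arsinh y) (hc.intervalIntegrable _ _), arsinh_zero, sub_zero]

theorem isSymbol_deriv_arsinh : IsSymbol (-1) (deriv arsinh) := by
  have h : deriv arsinh = fun x => jb x ^ (-1 : ℝ) :=
    funext fun x => by rw [(hasDerivAt_arsinh x).deriv, Real.rpow_neg_one, jb]
  rw [h]
  exact isSymbol_jb_rpow (-1)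

lemma abs_arsinh_le (x : ℝ) : |arsinh x| ≤ log 2 + log (jb x) := by
  have key : ∀ y, 0 ≤ y → arsinh y ≤ log 2 + log (jb y) := by
    intro y hy
    have hyjb : y ≤ jb y := (le_abs_self y).trans (abs_le_jb y)
    have hjb := jb_pos y
    rw [← log_mul two_ne_zero hjb.ne', arsinh]
    unfold jb at *
    exact log_le_log (by linarith) (by linarith)
  rcases le_total 0 x with hx | hx
  · rw [abs_of_nonneg (arsinh_nonneg_iff.mpr hx)]
    exact key x hx
  · rw [abs_of_nonpos (arsinh_nonpos_iff.mpr hx), ← arsinh_neg]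
    simpa [jb] using key (-x) (by linarith)

lemma one_add_abs_arsinh_le (x : ℝ) : 1 + |arsinh x| ≤ 2 * (1 + log (jb x)) := by
  have := abs_arsinh_le x
  have := log_nonneg (one_le_jb x)
  linarith [log_two_lt_d9]

theorem contDiff_iteratedDeriv_exp_mul_arsinh (β : ℕ) (x : ℝ) :
    ContDiff ℝ (⊤ : ℕ∞) (fun τ => iteratedDeriv β (fun y => exp (τ * arsinh y)) x) := by
  obtain ⟨P, -, -, hPeq⟩ := exists_iteratedDeriv_exp_mul_eq differentiable_arsinh
    isSymbol_deriv_arsinh β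
  rw [funext fun τ => hPeq τ x]
  exact ContDiff.sum fun i _ =>
    (contDiff_const.mul (contDiff_id.pow i)).mul (contDiff_id.mul contDiff_const).exp

theorem exists_bound_iteratedDeriv_iteratedDeriv_exp_mul_arsinh (M : ℝ) (α β : ℕ) :
    ∃ K, ∀ x τ, |τ| ≤ M → ∀ j ≤ α,
      |iteratedDeriv j (fun τ => iteratedDeriv β (fun y => exp (τ * arsinh y)) x) τ| ≤
        K * (1 + log (jb x)) ^ α * jb x ^ (-(β : ℝ)) * exp (τ * arsinh x) := by
  obtain ⟨P, hP, -, hPeq⟩ := exists_iteratedDeriv_exp_mul_eq differentiable_arsinh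
    isSymbol_deriv_arsinh β
  obtain ⟨CP, hCP0, hCP⟩ := (Set.finite_Iic β).exists_nonneg_forall_of_monotone
    (p := fun i C => ∀ x, |P i x| ≤ C * jb x ^ (-(β : ℝ)))
    (fun _ _ _ hC h x => (h x).trans
      (mul_le_mul_of_nonneg_right hC (Real.rpow_pos_of_pos (jb_pos x) _).le)) fun i _ =>
      let ⟨C, hC⟩ := (hP i).2 0
      ⟨C, fun x => by simpa using hC 0 le_rfl x⟩
  obtain ⟨C, hC0, hC⟩ := exists_bound_iteratedDeriv_poly_mul_exp M β α
  refine ⟨C * CP * 2 ^ α, fun x τ hτ j hj => ?_⟩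
  rw [funext fun τ => hPeq τ x]
  refine (hC (fun i => P i x) _ (arsinh x) τ (fun i hi => hCP i hi x) hτ j hj).trans ?_
  have := Real.rpow_pos_of_pos (jb_pos x) (-(β : ℝ))
  calc C * (CP * jb x ^ (-(β : ℝ))) * (1 + |arsinh x|) ^ α * exp (τ * arsinh x)
      ≤ C * (CP * jb x ^ (-(β : ℝ))) * (2 * (1 + log (jb x))) ^ α * exp (τ * arsinh x) := by
        gcongr
        exact one_add_abs_arsinh_le x
    _ = _ := by rw [mul_pow]; ring

lemma iteratedDeriv_eq_zero_of_eventually_eq {f : ℝ → ℝ} {ξ : ℝ} (hf : ∀ᶠ ζ in 𝓝 ξ, f ζ = f ξ)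
    {n : ℕ} (hn : n ≠ 0) : iteratedDeriv n f ξ = 0 := by
  rw [EventuallyEq.iteratedDeriv_eq n (g := fun _ => f ξ) hf, iteratedDeriv_const,
    if_neg hn]

theorem ContDiff.exists_bound_iteratedDeriv_of_eventually_eq {ω : ℝ → ℝ}
    (hω : ContDiff ℝ (⊤ : ℕ∞) ω) {R : ℝ} (hconst : ∀ η, R < |η| → ∀ᶠ ζ in 𝓝 η, ω ζ = ω η) (n : ℕ) :
    ∃ B, ∀ j, 1 ≤ j → j ≤ n → ∀ η, |iteratedDeriv j ω η| ≤ B := by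
  obtain ⟨B, hB0, hB⟩ := hω.exists_bound_iteratedDeriv_on (isCompact_Icc (a := -R) (b := R)) n
  refine ⟨B, fun j hj1 hj η => ?_⟩
  rcases le_or_gt |η| R with hη | hη
  · exact hB j hj η (abs_le.mp hη)
  · rwa [iteratedDeriv_eq_zero_of_eventually_eq (hconst η hη) (by omega), abs_zero]

theorem abs_iteratedDeriv_comp_comp_div_le {G φ : ℝ → ℝ} (hG : ContDiff ℝ (⊤ : ℕ∞) G)
    (hφ : ContDiff ℝ (⊤ : ℕ∞) φ) {n : ℕ} {h B Cb ξ : ℝ} (hh : 0 < h)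
    (hφB : ∀ j, 1 ≤ j → j ≤ n → |iteratedDeriv j φ (ξ / h)| ≤ B)
    (hGC : ∀ j ≤ n, |iteratedDeriv j G (φ (ξ / h))| ≤ Cb) :
    |iteratedDeriv n (fun ζ => G (φ (ζ / h))) ξ| ≤ n.factorial * Cb * max 1 B ^ n * h⁻¹ ^ n := by
  have hscale : iteratedDeriv n (fun ζ => G (φ (ζ / h))) ξ =
      h⁻¹ ^ n * iteratedDeriv n (G ∘ φ) (h⁻¹ * ξ) := by
    simp only [div_eq_inv_mul]
    exact congrFun
      (iteratedDeriv_comp_const_mul ((hG.comp hφ).of_le (by exact_mod_cast le_top)) h⁻¹) ξ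
  have hfdb := norm_iteratedFDeriv_comp_le hG hφ (n := n) (by exact_mod_cast le_top)
    (h⁻¹ * ξ) (C := Cb) (D := max 1 B)
    (fun j hj => by
      rw [norm_iteratedFDeriv_eq_norm_iteratedDeriv, ← div_eq_inv_mul]; exact hGC j hj)
    (fun j hj1 hj => by
      rw [norm_iteratedFDeriv_eq_norm_iteratedDeriv, ← div_eq_inv_mul]
      exact (hφB j hj1 hj).trans ((le_max_right 1 B).trans
        (le_self_pow₀ (le_max_left 1 B) (by omega))))
  rw [norm_iteratedFDeriv_eq_norm_iteratedDeriv, Real.norm_eq_abs] at hfdb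
  rw [hscale, abs_mul, abs_of_pos (by positivity)]
  calc h⁻¹ ^ n * |iteratedDeriv n (G ∘ φ) (h⁻¹ * ξ)|
      ≤ h⁻¹ ^ n * (n.factorial * Cb * max 1 B ^ n) := by gcongr
    _ = _ := by ring

lemma inv_le_mul_inv_jbh {h ξ R : ℝ} (hh : 0 < h) (hξ : |ξ| ≤ h * R) :
    h⁻¹ ≤ √(1 + R ^ 2) * (jbh h ξ)⁻¹ := by
  have hjbh : 0 < jbh h ξ := Real.sqrt_pos.mpr (by positivity)
  rw [← div_eq_mul_inv, le_div_iff₀ hjbh, inv_mul_le_iff₀ hh, jbh,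
    ← Real.sqrt_sq hh.le, ← Real.sqrt_mul (sq_nonneg _), Real.sqrt_sq hh.le]
  have := mul_self_le_mul_self (abs_nonneg ξ) hξ
  rw [abs_mul_abs_self] at this
  exact Real.sqrt_le_sqrt (by nlinarith)

section Cutoff

variable {R : ℝ} {ω : ℝ → ℝ}

lemma cutoff_eventually_eq (hω0 : ∀ ξ : ℝ, |ξ| ≤ 1 → ω ξ = 0)
    (hωcp : ∀ ξ₁ ξ₂ : ℝ, R ≤ ξ₁ → R ≤ ξ₂ → ω ξ₁ = ω ξ₂)
    (hωcm : ∀ ξ₁ ξ₂ : ℝ, ξ₁ ≤ -R → ξ₂ ≤ -R → ω ξ₁ = ω ξ₂) {η : ℝ} (hη : |η| < 1 ∨ R < |η|) :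
    ∀ᶠ ζ in 𝓝 η, ω ζ = ω η := by
  rcases hη with h | h
  · filter_upwards [(continuous_abs.tendsto η).eventually (gt_mem_nhds h)] with ζ hζ
    rw [hω0 ζ hζ.le, hω0 η h.le]
  rcases le_or_gt 0 η with h0 | h0
  · rw [abs_of_nonneg h0] at h
    filter_upwards [lt_mem_nhds h] with ζ hζ using hωcp ζ η hζ.le h.le
  · rw [abs_of_neg h0] at h
    filter_upwards [gt_mem_nhds (show η < -R by linarith)] with ζ hζ
      using hωcm ζ η hζ.le (by linarith)

lemma iteratedDeriv_comp_cutoff_eq_zero (hω0 : ∀ ξ : ℝ, |ξ| ≤ 1 → ω ξ = 0)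
    (hωcp : ∀ ξ₁ ξ₂ : ℝ, R ≤ ξ₁ → R ≤ ξ₂ → ω ξ₁ = ω ξ₂)
    (hωcm : ∀ ξ₁ ξ₂ : ℝ, ξ₁ ≤ -R → ξ₂ ≤ -R → ω ξ₁ = ω ξ₂) (G : ℝ → ℝ) (c : ℝ) {h ξ : ℝ}
    (hh : 0 < h) (hξ : ξ ∉ {ζ : ℝ | h ≤ |ζ| ∧ |ζ| ≤ h * R}) {n : ℕ} (hn : n ≠ 0) :
    iteratedDeriv n (fun ζ => G (c * ω (ζ / h))) ξ = 0 := by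
  have hη : |ξ / h| < 1 ∨ R < |ξ / h| := by
    rw [abs_div, abs_of_pos hh, div_lt_one hh, lt_div_iff₀ hh, mul_comm]
    simpa only [Set.mem_ofPred_eq, not_and_or, not_le] using hξ
  refine iteratedDeriv_eq_zero_of_eventually_eq ?_ hn
  filter_upwards [((continuous_id.div_const h).tendsto ξ).eventually
    (cutoff_eventually_eq hω0 hωcp hωcm hη)] with ζ hζ
  simp only [id] at hζ
  rw [hζ]

theorem exists_bound_iteratedDeriv_comp_cutoff (hω : ContDiff ℝ (⊤ : ℕ∞) ω)
    (hconst : ∀ η, R < |η| → ∀ᶠ ζ in 𝓝 η, ω ζ = ω η) (M : ℝ) (n : ℕ) :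
    ∃ D, ∀ G : ℝ → ℝ, ContDiff ℝ (⊤ : ℕ∞) G → ∀ c h ξ Cb : ℝ, |c| ≤ M → 0 < h → |ξ| ≤ h * R →
      (∀ j ≤ n, |iteratedDeriv j G (c * ω (ξ / h))| ≤ Cb) →
      |iteratedDeriv n (fun ζ => G (c * ω (ζ / h))) ξ| ≤ D * Cb * (jbh h ξ)⁻¹ ^ n := by
  obtain ⟨B, hB⟩ := hω.exists_bound_iteratedDeriv_of_eventually_eq hconst n
  refine ⟨n.factorial * max 1 (M * B) ^ n * √(1 + R ^ 2) ^ n,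
    fun G hG c h ξ Cb hc hh hξ hGC => ?_⟩
  have hφB : ∀ j, 1 ≤ j → j ≤ n → |iteratedDeriv j (fun η => c * ω η) (ξ / h)| ≤ M * B :=
    fun j hj1 hj => by
      rw [iteratedDeriv_const_mul_field, abs_mul]
      exact mul_le_mul hc (hB j hj1 hj _) (abs_nonneg _) ((abs_nonneg c).trans hc)
  have hCb : 0 ≤ Cb := (abs_nonneg _).trans (hGC 0 (Nat.zero_le n))
  refine (abs_iteratedDeriv_comp_comp_div_le hG (contDiff_const.mul hω) hh hφB hGC).trans ?_
  calc n.factorial * Cb * max 1 (M * B) ^ n * h⁻¹ ^ n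
      ≤ n.factorial * Cb * max 1 (M * B) ^ n * (√(1 + R ^ 2) * (jbh h ξ)⁻¹) ^ n := by
        gcongr
        exact inv_le_mul_inv_jbh hh hξ
    _ = _ := by rw [mul_pow]; ring

end Cutoff

theorem stmt7_general (M R : ℝ)
    (ω : ℝ → ℝ) (hω : ContDiff ℝ (⊤ : ℕ∞) ω) (hωb : ∀ ξ : ℝ, |ω ξ| ≤ 1)
    (hω0 : ∀ ξ : ℝ, |ξ| ≤ 1 → ω ξ = 0)
    (hωcp : ∀ ξ₁ ξ₂ : ℝ, R ≤ ξ₁ → R ≤ ξ₂ → ω ξ₁ = ω ξ₂)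
    (hωcm : ∀ ξ₁ ξ₂ : ℝ, ξ₁ ≤ -R → ξ₂ ≤ -R → ω ξ₁ = ω ξ₂) :
    ∀ α β : ℕ, 1 ≤ α → 1 ≤ β → ∃ C > 0, ∀ h : ℝ, 1 ≤ h → ∀ x ξ : ℝ,
      ∀ s : ℝ, s = 1 ∨ s = -1 →
        |iteratedDeriv α
            (fun ξ' => iteratedDeriv β
              (fun x' => Real.exp
                (s * (M * ω (ξ' / h) * ∫ y in (0:ℝ)..x', (jb y)⁻¹))) x) ξ| ≤
          C * (1 + Real.log (jb x) *
              Set.indicator {ζ : ℝ | h ≤ |ζ| ∧ |ζ| ≤ h * R} (fun _ => (1:ℝ)) ξ) ^ α *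
            jb x ^ (-(β : ℝ)) * jbh h ξ ^ (-(α : ℝ)) *
            Real.exp (s * (M * ω (ξ / h) * ∫ y in (0:ℝ)..x, (jb y)⁻¹)) := by
  intro α β hα _
  obtain ⟨K, hK⟩ := exists_bound_iteratedDeriv_iteratedDeriv_exp_mul_arsinh |M| α β
  obtain ⟨D, hD⟩ := exists_bound_iteratedDeriv_comp_cutoff hω
    (fun η hη => cutoff_eventually_eq hω0 hωcp hωcm (Or.inr hη)) |M| α
  refine ⟨max 1 (D * K), lt_max_of_lt_left one_pos, fun h hh x ξ s hs => ?_⟩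
  have hh0 : 0 < h := by linarith
  have hsM : |s * M| ≤ |M| := by rcases hs with rfl | rfl <;> simp
  have hc : |s * M * ω (ξ / h)| ≤ |M| := by
    rw [abs_mul]
    exact (mul_le_of_le_one_right (abs_nonneg _) (hωb _)).trans hsM
  have hjb := jb_pos x
  have hjbh : 0 < jbh h ξ := Real.sqrt_pos.mpr (by positivity)
  simp only [integral_jb_inv, ← mul_assoc]
  by_cases hξ : ξ ∈ {ζ : ℝ | h ≤ |ζ| ∧ |ζ| ≤ h * R}
  · have hL := log_nonneg (one_le_jb x)
    rw [Set.indicator_of_mem hξ, mul_one, Real.rpow_neg hjbh.le, Real.rpow_natCast, ← inv_pow]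
    calc _ ≤ D * (K * (1 + log (jb x)) ^ α * jb x ^ (-(β : ℝ)) * exp (s * M * ω (ξ / h) * arsinh x))
          * (jbh h ξ)⁻¹ ^ α :=
          hD _ (contDiff_iteratedDeriv_exp_mul_arsinh β x) (s * M) h ξ _ hsM hh0 hξ.2
            fun j hj => hK x _ hc j hj
      _ ≤ _ := by
          have hrest : 0 ≤ (1 + log (jb x)) ^ α * jb x ^ (-(β : ℝ)) * (jbh h ξ)⁻¹ ^ α *
              exp (s * M * ω (ξ / h) * arsinh x) := by positivity
          linarith [mul_le_mul_of_nonneg_right (le_max_right 1 (D * K)) hrest]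
  · have hzero := iteratedDeriv_comp_cutoff_eq_zero hω0 hωcp hωcm
      (fun τ => iteratedDeriv β (fun y => exp (τ * arsinh y)) x) (s * M) hh0 hξ (n := α) (by omega)
    rw [Set.indicator_of_notMem hξ, mul_zero, add_zero, one_pow, abs_eq_zero.mpr hzero]
    positivity

/-- mixed estimates for `∂_ξ^α ∂_x^β e^{±λ(x,ξ)}`, `α, β ≥ 1`, where
`λ(x,ξ) = M·ω(ξ/h)·∫₀ˣ ⟨y⟩⁻¹ dy`; the constant may depend on `α, β, M, R, ω` but not
on `h, x, ξ`. -/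
theorem stmt7 (M R : ℝ) (hM : 0 < M) (hR : 1 < R)
    (ω : ℝ → ℝ) (hω : ContDiff ℝ (⊤ : ℕ∞) ω) (hωb : ∀ ξ : ℝ, |ω ξ| ≤ 1)
    (hω0 : ∀ ξ : ℝ, |ξ| ≤ 1 → ω ξ = 0)
    (hωcp : ∀ ξ₁ ξ₂ : ℝ, R ≤ ξ₁ → R ≤ ξ₂ → ω ξ₁ = ω ξ₂)
    (hωcm : ∀ ξ₁ ξ₂ : ℝ, ξ₁ ≤ -R → ξ₂ ≤ -R → ω ξ₁ = ω ξ₂) :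
    ∀ α β : ℕ, 1 ≤ α → 1 ≤ β → ∃ C > 0, ∀ h : ℝ, 1 ≤ h → ∀ x ξ : ℝ,
      ∀ s : ℝ, s = 1 ∨ s = -1 →
        |iteratedDeriv α
            (fun ξ' => iteratedDeriv β
              (fun x' => Real.exp
                (s * (M * ω (ξ' / h) * ∫ y in (0:ℝ)..x', (jb y)⁻¹))) x) ξ| ≤
          C * (1 + Real.log (jb x) *
              Set.indicator {ζ : ℝ | h ≤ |ζ| ∧ |ζ| ≤ h * R} (fun _ => (1:ℝ)) ξ) ^ α *
            jb x ^ (-(β : ℝ)) * jbh h ξ ^ (-(α : ℝ)) *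
            Real.exp (s * (M * ω (ξ / h) * ∫ y in (0:ℝ)..x, (jb y)⁻¹)) :=
  stmt7_general M R ω hω hωb hω0 hωcp hωcm
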